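/- arXiv:0807.4864 — 2 statements merged into one kernel-verified Lean document; each statement's English description precedes it below -/
import Mathlib

section
/- Let b > 1, s ≥ 2 an integer, and h < 0. The sequence r_0 = 1, r_{n+1} = (exp((s-1)h) r_n^s + (b-1))/b converges to a limit r_∞ ∈ (0,1) which is a fixed point of the map x ↦ (exp((s-1)h) x^s + (b-1))/b. -/
open Real Filter Set

/-!
The recursion map `f x = (c x ^ s + (b - 1)) / b` with `c = exp ((s - 1) h) ∈ (0, 1)` is monotone
on `[0, ∞)` and maps `[(b - 1) / b, 1]` into itself. Since `f 1 < 1`, the orbit of `1` is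
antitone, hence converges inside that interval to a limit `L ≤ f 1 < 1`, and continuity of `f`
makes `L` a fixed point.
-/

section Recursion

variable {α : Type*} {f : α → α} {r : ℕ → α}

theorem mem_of_succ_eq_of_mapsTo {S : Set α} (hS : MapsTo f S S) (h0 : r 0 ∈ S)
    (hrec : ∀ n, r (n + 1) = f (r n)) (n : ℕ) : r n ∈ S := by
  induction n with
  | zero => exact h0
  | succ n ih => exact hrec n ▸ hS ih

theorem antitone_of_succ_eq_of_monotoneOn [Preorder α] {S : Set α}
    (hf : MonotoneOn f S) (hr : ∀ n, r n ∈ S) (hrec : ∀ n, r (n + 1) = f (r n))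
    (h10 : r 1 ≤ r 0) : Antitone r := by
  refine antitone_nat_of_succ_le fun n => ?_
  induction n with
  | zero => exact h10
  | succ n ih =>
    have h := hf (hr (n + 1)) (hr n) ih
    rwa [← hrec, ← hrec] at h

theorem map_eq_of_tendsto_of_succ_eq [TopologicalSpace α] [T2Space α] {L : α}
    (hr : Tendsto r atTop (nhds L)) (hf : ContinuousAt f L) (hrec : ∀ n, r (n + 1) = f (r n)) :
    f L = L :=
  tendsto_nhds_unique (hf.tendsto.comp hr)
    ((hr.comp (tendsto_add_atTop_nat 1)).congr hrec)

end Recursion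

section AnnealedMap

noncomputable def annealedMap (b c : ℝ) (s : ℕ) (x : ℝ) : ℝ := (c * x ^ s + (b - 1)) / b

variable {b c : ℝ} {s : ℕ}

theorem continuous_annealedMap : Continuous (annealedMap b c s) := by
  unfold annealedMap
  fun_prop

theorem annealedMap_monotoneOn (hc : 0 ≤ c) (hb : 0 < b) :
    MonotoneOn (annealedMap b c s) (Ici 0) :=
  fun x hx y _ hxy => by
    unfold annealedMap
    gcongr

theorem annealedMap_one_lt (hc : c < 1) (hb : 0 < b) : annealedMap b c s 1 < 1 := by
  rw [annealedMap, one_pow, mul_one, div_lt_one hb]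
  linarith

theorem annealedMap_mapsTo (hc₀ : 0 ≤ c) (hc₁ : c ≤ 1) (hb : 1 ≤ b) :
    MapsTo (annealedMap b c s) (Icc ((b - 1) / b) 1) (Icc ((b - 1) / b) 1) := by
  have hb₀ : 0 < b := by linarith
  intro x ⟨hlo, hhi⟩
  have hx : 0 ≤ x := (div_nonneg (by linarith) hb₀.le).trans hlo
  have hxs : x ^ s ≤ 1 := pow_le_one₀ hx hhi
  unfold annealedMap
  constructor
  · gcongr
    linarith [mul_nonneg hc₀ (pow_nonneg hx s)]
  · rw [div_le_one hb₀]
    nlinarith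

end AnnealedMap

/-- for `b > 1`, integer `s ≥ 2`, `h < 0`, the annealed recursion
`r 0 = 1`, `r (n+1) = (exp((s-1)h) r n ^ s + (b-1))/b` converges to a limit
`L ∈ (0,1)` which is a fixed point of the recursion map. -/
theorem stmt1 (b h : ℝ) (s : ℕ) (hb : 1 < b) (hs : 2 ≤ s) (hh : h < 0)
    (r : ℕ → ℝ) (hr0 : r 0 = 1)
    (hrec : ∀ n, r (n + 1) = (Real.exp (((s : ℝ) - 1) * h) * r n ^ s + (b - 1)) / b) :
    ∃ L : ℝ, 0 < L ∧ L < 1 ∧ Filter.Tendsto r Filter.atTop (nhds L) ∧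
      (Real.exp (((s : ℝ) - 1) * h) * L ^ s + (b - 1)) / b = L := by
  set c := Real.exp (((s : ℝ) - 1) * h)
  have hc₁ : c < 1 := Real.exp_lt_one_iff.mpr <| mul_neg_of_pos_of_neg
    (by linarith [show (2 : ℝ) ≤ s by exact_mod_cast hs]) hh
  have hb₀ : 0 < b := by linarith
  let f := annealedMap b c s
  have hrec' : ∀ n, r (n + 1) = f (r n) := hrec
  have hmem := mem_of_succ_eq_of_mapsTo (annealedMap_mapsTo (exp_pos _).le hc₁.le hb.le)
    (by simp [hr0, div_le_one hb₀]) hrec'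
  have hanti : Antitone r := antitone_of_succ_eq_of_monotoneOn
    ((annealedMap_monotoneOn (exp_pos _).le hb₀).mono fun x hx =>
      (div_nonneg (by linarith) hb₀.le).trans hx.1) hmem hrec'
    (by rw [hrec', hr0]; exact (annealedMap_one_lt hc₁ hb₀).le)
  have hlim := tendsto_atTop_ciInf hanti ⟨(b - 1) / b, forall_mem_range.mpr fun n => (hmem n).1⟩
  set L := ⨅ n, r n
  have hL : L ∈ Icc ((b - 1) / b) 1 := isClosed_Icc.mem_of_tendsto hlim (.of_forall hmem)
  refine ⟨L, (div_pos (by linarith) hb₀).trans_le hL.1, ?_, hlim,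
    map_eq_of_tendsto_of_succ_eq hlim continuous_annealedMap.continuousAt hrec'⟩
  calc L ≤ r 1 := hanti.le_of_tendsto hlim 1
    _ = f 1 := by rw [hrec', hr0]
    _ < 1 := annealedMap_one_lt hc₁ hb₀
end

section
/- Let s ≥ 2, b = √s, ε > 0 small, and let (g_i)_{0≤i≤n} be a nonnegative sequence with g_0 = 0 satisfying g_i ≥ (1/b)(1 − (1 − g_{i-1})^s) for all 1 ≤ i ≤ n and g_i ∈ [0,1]. If g_n ≤ 2ε and ε is small enough, then g_k ≤ 2ε s^{(k-n)/4} for all k ≤ n. -/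
open Real

private lemma binom_ub (m : ℕ) (y : ℝ) (hy0 : 0 ≤ y) (hy1 : y ≤ 1) :
    (1 - y) ^ m ≤ 1 - m * y + m * (m - 1) / 2 * y ^ 2 := by
  induction m with
  | zero => norm_num
  | succ k ih =>
    have h1y : (0:ℝ) ≤ 1 - y := by linarith
    have h := mul_le_mul_of_nonneg_right ih h1y
    have hkk : (0:ℝ) ≤ (k:ℝ) * ((k:ℝ) - 1) := by
      rcases Nat.eq_zero_or_pos k with hk | hk
      · simp [hk]
      · have : (1:ℝ) ≤ (k:ℝ) := by exact_mod_cast hk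
        nlinarith
    have hy3 : (0:ℝ) ≤ y ^ 3 := by positivity
    calc (1 - y) ^ (k+1) = (1 - y) ^ k * (1 - y) := by ring
      _ ≤ (1 - (k:ℝ) * y + (k:ℝ) * ((k:ℝ) - 1) / 2 * y ^ 2) * (1 - y) := h
      _ ≤ 1 - (k+1 : ℕ) * y + (k+1 : ℕ) * ((k+1 : ℕ) - 1) / 2 * y ^ 2 := by
          push_cast
          nlinarith [mul_nonneg hkk hy3]

/-- with `s ≥ 2`, `b = √s`, for `ε > 0` small enough: if a
sequence `(g i)_{i ≤ n}` with values in `[0,1]` satisfies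
`g i ≥ (1/b)(1 - (1 - g (i-1))^s)` for `1 ≤ i ≤ n` and `g n ≤ 2ε`, then
`g k ≤ 2ε s^((k-n)/4)` for all `k ≤ n`. -/
theorem stmt13 (s : ℕ) (hs : 2 ≤ s) (b : ℝ) (hb : b = Real.sqrt s) :
    ∃ ε₀ : ℝ, 0 < ε₀ ∧ ∀ ε : ℝ, 0 < ε → ε < ε₀ → ∀ n : ℕ, ∀ g : ℕ → ℝ,
      g 0 = 0 → (∀ i ≤ n, 0 ≤ g i ∧ g i ≤ 1) →
      (∀ i, 1 ≤ i → i ≤ n → (1 / b) * (1 - (1 - g (i - 1)) ^ s) ≤ g i) →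
      g n ≤ 2 * ε →
      ∀ k ≤ n, g k ≤ 2 * ε * (s : ℝ) ^ (((k : ℝ) - (n : ℝ)) / 4) := by
  set S : ℝ := (s : ℝ) with hSdef
  have hS2 : (2:ℝ) ≤ S := by rw [hSdef]; exact_mod_cast hs
  have hS0 : (0:ℝ) < S := by linarith
  set c : ℝ := S ^ (-(1/4) : ℝ) with hcdef
  have hc0 : 0 < c := Real.rpow_pos_of_pos hS0 _
  have hc1 : c < 1 := Real.rpow_lt_one_of_one_lt_of_neg (by linarith) (by norm_num)
  have hb0 : 0 < b := by rw [hb]; exact Real.sqrt_pos.2 hS0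
  have hb2 : b ^ 2 = S := by rw [hb]; exact Real.sq_sqrt hS0.le
  have hbrpow : b = S ^ ((1:ℝ)/2) := by rw [hb, Real.sqrt_eq_rpow]
  have hbc : b * c ^ 2 = 1 := by
    rw [hbrpow, hcdef, ← Real.rpow_natCast (S ^ (-(1/4) : ℝ)) 2,
      ← Real.rpow_mul hS0.le, ← Real.rpow_add hS0]
    norm_num
  refine ⟨(1 - c) / (S * b), div_pos (by linarith) (mul_pos hS0 hb0), ?_⟩
  intro ε hε hεlt n g hg0 hgmem hrec hgn
  have hεSb : ε * (S * b) < 1 - c := (lt_div_iff₀ (mul_pos hS0 hb0)).mp hεlt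
  -- Key step: if the recursion holds and x = g i ≤ 2ε, then g (i-1) ≤ c * g i
  have key : ∀ x y : ℝ, 0 ≤ x → x ≤ 2 * ε → 0 ≤ y → y ≤ 1 →
      (1 / b) * (1 - (1 - y) ^ s) ≤ x → y ≤ c * x := by
    intro x y hx0 hx2 hy0 hy1 hr
    have hbx : 1 - (1 - y) ^ s ≤ b * x := by
      have h := mul_le_mul_of_nonneg_left hr hb0.le
      have : b * ((1 / b) * (1 - (1 - y) ^ s)) = 1 - (1 - y) ^ s := by
        field_simp
      linarith [this ▸ h]
    have h2 : y ≤ b * x := by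
      have hpow : (1 - y) ^ s ≤ (1 - y) ^ 1 :=
        pow_le_pow_of_le_one (by linarith) (by linarith) (by omega)
      simp at hpow
      linarith
    have h1 : S * y - S * (S - 1) / 2 * y ^ 2 ≤ b * x := by
      have := binom_ub s y hy0 hy1
      rw [← hSdef] at this
      linarith
    have hy2b : y ≤ 2 * b * ε := by nlinarith
    have h3 : (S - 1) / 2 * y ≤ 1 - c := by
      nlinarith [mul_nonneg (by linarith : (0:ℝ) ≤ S - 1)
        (by linarith : (0:ℝ) ≤ 2 * b * ε - y), mul_pos hb0 hε]
    have h4 : S * c * y ≤ b * x := by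
      nlinarith [mul_nonneg (mul_nonneg hS0.le hy0)
        (by linarith : (0:ℝ) ≤ (1 - c) - (S - 1) / 2 * y)]
    have h5 : b * c * y ≤ x := by
      have h := mul_le_mul_of_nonneg_left h4 (mul_nonneg hc0.le hc0.le)
      have e1 : c * c * (S * c * y) = (b * c ^ 2) * (b * c * y) := by
        rw [← hb2]; ring
      have e2 : c * c * (b * x) = (b * c ^ 2) * x := by ring
      rw [e1, e2, hbc, one_mul, one_mul] at h
      exact h
    have h6 : (b * c) * y ≤ (b * c) * (c * x) := by
      have e : (b * c) * (c * x) = (b * c ^ 2) * x := by ring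
      rw [e, hbc, one_mul]
      exact h5
    exact le_of_mul_le_mul_left h6 (mul_pos hb0 hc0)
  -- backward induction
  have cpow_le_one : ∀ j : ℕ, c ^ j ≤ 1 := fun j => pow_le_one₀ hc0.le hc1.le
  have main : ∀ j ≤ n, g (n - j) ≤ 2 * ε * c ^ j := by
    intro j
    induction j with
    | zero => intro _; simpa using hgn
    | succ j ih =>
      intro hj
      have hj' : j ≤ n := by omega
      have hgj := ih hj'
      have hi1 : 1 ≤ n - j := by omega
      have hile : n - j ≤ n := by omega
      have hx0 : 0 ≤ g (n - j) := (hgmem _ hile).1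
      have hx2 : g (n - j) ≤ 2 * ε := by
        have h1 : 2 * ε * c ^ j ≤ 2 * ε * 1 :=
          mul_le_mul_of_nonneg_left (cpow_le_one j) (by linarith)
        linarith
      have hy01 := hgmem (n - (j+1)) (by omega)
      have hr := hrec (n - j) hi1 hile
      have heq : n - j - 1 = n - (j + 1) := by omega
      rw [heq] at hr
      have hstep := key (g (n - j)) (g (n - (j+1))) hx0 hx2 hy01.1 hy01.2 hr
      calc g (n - (j+1)) ≤ c * g (n - j) := hstep
        _ ≤ c * (2 * ε * c ^ j) := mul_le_mul_of_nonneg_left hgj hc0.le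
        _ = 2 * ε * c ^ (j + 1) := by ring
  intro k hk
  have hmain := main (n - k) (by omega)
  have hnk : n - (n - k) = k := by omega
  rw [hnk] at hmain
  have hexp : (s : ℝ) ^ (((k : ℝ) - (n : ℝ)) / 4) = c ^ (n - k) := by
    have hn : (n : ℝ) = (k : ℝ) + ((n - k : ℕ) : ℝ) := by
      have : n = k + (n - k) := by omega
      exact_mod_cast congrArg (fun m : ℕ => (m : ℝ)) this
    rw [hcdef, ← Real.rpow_natCast (S ^ (-(1/4) : ℝ)) (n - k),
      ← Real.rpow_mul hS0.le, ← hSdef]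
    congr 1
    rw [hn]
    ring
  rw [hexp]
  exact hmain
end
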